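/- arXiv:2601.08069 — 3 statements merged into one kernel-verified Lean document; each statement's English description precedes it below -/
import Mathlib

section
/- Fix α with 0 < α < 1/3 and let r_α = (1/2)·(1 − √((1−3α)/(1−α))). Then for all n ≥ 2 and all y ∈ (r_α, 1/2), we have f_{n,α}(y) < 0. -/
/-- The drift function of the 2-choices dynamics with node failures on the
complete graph `K_n` with failure probability `α`. -/
noncomputable def fDrift (n : ℕ) (α y : ℝ) : ℝ :=
  (1 - 2*y) * (α/2) - (1-α) * ((n : ℝ)/((n : ℝ)-1))^2 * y * (1-y) * (1-2*y)

theorem stmt_1 (α : ℝ) (hα0 : 0 < α) (hα3 : α < 1/3)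
    (r : ℝ) (hr : r = (1/2) * (1 - Real.sqrt ((1-3*α)/(1-α))))
    (n : ℕ) (hn : 2 ≤ n) (y : ℝ) (hy : y ∈ Set.Ioo r (1/2)) :
    fDrift n α y < 0 := by
  obtain ⟨hy1, hy2⟩ := hy
  have hα1 : α < 1 := by linarith
  set s := Real.sqrt ((1-3*α)/(1-α)) with hs
  have hq0 : (0:ℝ) ≤ (1-3*α)/(1-α) := div_nonneg (by linarith) (by linarith)
  have hs0 : 0 ≤ s := Real.sqrt_nonneg _
  have hs2 : s^2 = (1-3*α)/(1-α) := Real.sq_sqrt hq0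
  have hs2' : s^2 * (1-α) = 1-3*α := by
    rw [hs2, div_mul_cancel₀ _ (by linarith : (1:ℝ)-α ≠ 0)]
  have hsq1 : s^2 < 1 := by nlinarith
  have hs1 : s < 1 := by nlinarith
  have hr0 : 0 < r := by rw [hr]; linarith
  -- key: (1-α)*y*(1-y) > α/2
  have hkey : α/2 < (1-α) * y * (1-y) := by
    have hrr : (1-α) * r * (1-r) = α/2 := by rw [hr]; linear_combination (-1/4) * hs2'
    nlinarith [mul_pos (sub_pos.mpr hy1) (by linarith : (0:ℝ) < 1 - y - r)]
  -- c ≥ 1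
  have hn1 : (1:ℝ) ≤ (n:ℝ) - 1 := by
    have : (2:ℝ) ≤ (n:ℝ) := by exact_mod_cast hn
    linarith
  set c := ((n : ℝ)/((n : ℝ)-1))^2 with hcdef
  have hc : 1 ≤ c := by
    rw [hcdef]
    have h1 : (1:ℝ) ≤ (n:ℝ)/((n:ℝ)-1) := by
      rw [le_div_iff₀ (by linarith)]; linarith
    nlinarith
  have hy0 : 0 < y := lt_trans hr0 hy1
  have h2y : 0 < 1 - 2*y := by linarith
  have hyy : 0 < y * (1-y) := by nlinarith
  have hfd : fDrift n α y = (1-2*y)*(α/2) - (1-α)*c*y*(1-y)*(1-2*y) := rfl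
  rw [hfd]
  have h3 : α/2 < (1-α) * c * y * (1-y) := by
    nlinarith [mul_le_mul_of_nonneg_right hc (le_of_lt hyy)]
  nlinarith [mul_lt_mul_of_pos_right h3 h2y]
end

section
/- Let (Y(t)) be a continuous-time Markov chain on a finite state space 𝒴 with generator G, and let Φ : 𝒴 → ℝ_{≥0} be a function vanishing exactly on a nonempty subset 𝒴₀ ⊆ 𝒴, satisfying the drift condition GΦ(y) ≤ −c·Φ(y) for all y ∈ 𝒴 and some constant c > 0. Then the hitting time τ = inf{t ≥ 0 : Y(t) ∈ 𝒴₀} satisfies E_y[τ] ≤ (1 + log(Φ(y)/Φ_min))/c for every y ∈ 𝒴 \ 𝒴₀, where Φ_min = min_{y ∈ 𝒴∖𝒴₀} Φ(y) > 0. -/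
open Finset

/-- **Logarithmic hitting-time bound.**
For a continuous-time Markov chain on a finite state space `𝒴` with transition
rates `q y y'` (nonnegative off the diagonal) and generator
`G f y = ∑ y', q y y' * (f y' - f y)`, suppose `Φ : 𝒴 → ℝ≥0` vanishes exactly on a
nonempty set `𝒴₀` and satisfies the drift condition `G Φ y ≤ -c * Φ y` for all `y`.
The expected hitting time of `𝒴₀`, which is the (unique, nonnegative) solution
`h` of the system `h = 0` on `𝒴₀` and `G h = -1` off `𝒴₀`, satisfies
`h y ≤ (1 + log (Φ y / Φmin)) / c` for every `y ∉ 𝒴₀`, where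
`Φmin = min_{y ∉ 𝒴₀} Φ y > 0`. -/
theorem stmt_8 {𝒴 : Type*} [Fintype 𝒴] [DecidableEq 𝒴]
    (q : 𝒴 → 𝒴 → ℝ) (hq : ∀ y y', y ≠ y' → 0 ≤ q y y')
    (G : (𝒴 → ℝ) → 𝒴 → ℝ)
    (hG : ∀ f y, G f y = ∑ y', q y y' * (f y' - f y))
    (𝒴₀ : Set 𝒴) (h𝒴₀ : 𝒴₀.Nonempty)
    (Φ : 𝒴 → ℝ) (hΦnn : ∀ y, 0 ≤ Φ y) (hΦ0 : ∀ y, Φ y = 0 ↔ y ∈ 𝒴₀)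
    (c : ℝ) (hc : 0 < c)
    (hdrift : ∀ y, G Φ y ≤ -c * Φ y)
    (h : 𝒴 → ℝ)               -- the expected-hitting-time function `y ↦ 𝔼_y[τ]`
    (hhnn : ∀ y, 0 ≤ h y)
    (hh0 : ∀ y ∈ 𝒴₀, h y = 0)
    (hhG : ∀ y ∉ 𝒴₀, G h y = -1)
    (Φmin : ℝ) (hΦmin : IsLeast (Φ '' {y | y ∉ 𝒴₀}) Φmin) (hΦminpos : 0 < Φmin) :
    ∀ y ∉ 𝒴₀, h y ≤ (1 + Real.log (Φ y / Φmin)) / c := by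
  classical
  intro y₀ hy₀
  set W : 𝒴 → ℝ := fun y => if y ∈ 𝒴₀ then 0 else (1 + Real.log (Φ y / Φmin)) / c with hWdef
  have hΦpos : ∀ y, y ∉ 𝒴₀ → 0 < Φ y := fun y hy =>
    (hΦnn y).lt_of_ne (fun h' => hy ((hΦ0 y).mp h'.symm))
  have hΦge : ∀ y, y ∉ 𝒴₀ → Φmin ≤ Φ y := fun y hy => hΦmin.2 ⟨y, hy, rfl⟩
  have hlognn : ∀ y, y ∉ 𝒴₀ → 0 ≤ Real.log (Φ y / Φmin) := by
    intro y hy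
    apply Real.log_nonneg
    rw [le_div_iff₀ hΦminpos]
    simpa using hΦge y hy
  -- key pointwise inequality
  have key : ∀ y, y ∉ 𝒴₀ → ∀ y', W y' - W y ≤ (Φ y' - Φ y) / (c * Φ y) := by
    intro y hy y'
    have hpy := hΦpos y hy
    have hcy : 0 < c * Φ y := mul_pos hc hpy
    by_cases hy' : y' ∈ 𝒴₀
    · have hΦy' : Φ y' = 0 := (hΦ0 y').mpr hy'
      simp only [hWdef, if_pos hy', if_neg hy, hΦy']
      have hR : (0 - Φ y) / (c * Φ y) = -(1 / c) := by
        field_simp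
        ring
      have h1 : 1 / c ≤ (1 + Real.log (Φ y / Φmin)) / c :=
        (div_le_div_iff_of_pos_right hc).mpr (by linarith [hlognn y hy])
      rw [hR]
      linarith
    · simp only [hWdef, if_neg hy', if_neg hy]
      have hpy' := hΦpos y' hy'
      rw [div_sub_div _ _ (ne_of_gt hc) (ne_of_gt hc), div_le_div_iff₀ (by positivity) hcy]
      have hlog : Real.log (Φ y' / Φ y) ≤ Φ y' / Φ y - 1 :=
        Real.log_le_sub_one_of_pos (by positivity)
      rw [Real.log_div (ne_of_gt hpy') (ne_of_gt hpy)] at hlog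
      have h2 : Real.log (Φ y' / Φmin) - Real.log (Φ y / Φmin) =
          Real.log (Φ y') - Real.log (Φ y) := by
        rw [Real.log_div (ne_of_gt hpy') (ne_of_gt hΦminpos),
          Real.log_div (ne_of_gt hpy) (ne_of_gt hΦminpos)]
        ring
      have h3 : (Φ y' / Φ y - 1) * Φ y = Φ y' - Φ y := by
        field_simp
      have h4 : (Real.log (Φ y' / Φmin) - Real.log (Φ y / Φmin)) * Φ y ≤ Φ y' - Φ y := by
        rw [h2]
        nlinarith [mul_le_mul_of_nonneg_right hlog hpy.le, h3]
      nlinarith [mul_le_mul_of_nonneg_left h4 (mul_pos hc hc).le]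
  -- generator bound on W off 𝒴₀
  have hGW : ∀ y, y ∉ 𝒴₀ → ∑ y', q y y' * (W y' - W y) ≤ -1 := by
    intro y hy
    have hpy := hΦpos y hy
    have hcy : 0 < c * Φ y := mul_pos hc hpy
    have h1 : ∑ y', q y y' * (W y' - W y)
        ≤ ∑ y', q y y' * ((Φ y' - Φ y) / (c * Φ y)) := by
      apply Finset.sum_le_sum
      intro y' _
      by_cases hyy : y' = y
      · subst hyy; simp
      · exact mul_le_mul_of_nonneg_left (key y hy y') (hq y y' (Ne.symm hyy))
    have h2 : ∑ y', q y y' * ((Φ y' - Φ y) / (c * Φ y))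
        = (∑ y', q y y' * (Φ y' - Φ y)) / (c * Φ y) := by
      rw [Finset.sum_div]
      exact Finset.sum_congr rfl fun y' _ => by ring
    have h3 : (∑ y', q y y' * (Φ y' - Φ y)) / (c * Φ y) ≤ -1 := by
      rw [div_le_iff₀ hcy]
      have := hdrift y
      rw [hG] at this
      nlinarith
    calc ∑ y', q y y' * (W y' - W y) ≤ _ := h1
      _ = _ := h2
      _ ≤ -1 := h3
  -- maximum principle with perturbation δ Φ
  have main : ∀ δ : ℝ, 0 < δ → ∀ y, h y - W y ≤ δ * Φ y := by
    intro δ hδ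
    by_contra hcon
    push_neg at hcon
    obtain ⟨z, hz⟩ := hcon
    set g : 𝒴 → ℝ := fun y => h y - W y - δ * Φ y with hgdef
    obtain ⟨ym, -, hym⟩ := Finset.exists_max_image (univ : Finset 𝒴) g ⟨z, mem_univ z⟩
    have hgym : 0 < g ym := lt_of_lt_of_le (by simpa [hgdef] using hz) (hym z (mem_univ z))
    have hymnot : ym ∉ 𝒴₀ := by
      intro hmem
      have : g ym = 0 := by
        simp [hgdef, hh0 ym hmem, hWdef, if_pos hmem, (hΦ0 ym).mpr hmem]
      rw [this] at hgym; exact lt_irrefl 0 hgym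
    have hle : ∑ y', q ym y' * (g y' - g ym) ≤ 0 := by
      apply Finset.sum_nonpos
      intro y' _
      by_cases hyy : y' = ym
      · subst hyy; simp
      · exact mul_nonpos_of_nonneg_of_nonpos (hq ym y' (Ne.symm hyy))
          (sub_nonpos.mpr (hym y' (mem_univ y')))
    have e1 : ∑ y', q ym y' * (g y' - g ym)
        = (∑ y', q ym y' * (h y' - h ym)) - (∑ y', q ym y' * (W y' - W ym))
          - δ * (∑ y', q ym y' * (Φ y' - Φ ym)) := by
      rw [Finset.mul_sum, ← Finset.sum_sub_distrib, ← Finset.sum_sub_distrib]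
      exact Finset.sum_congr rfl fun y' _ => by simp only [hgdef]; ring
    have eh : ∑ y', q ym y' * (h y' - h ym) = -1 := by
      rw [← hG]; exact hhG ym hymnot
    have eW : ∑ y', q ym y' * (W y' - W ym) ≤ -1 := hGW ym hymnot
    have eΦ : ∑ y', q ym y' * (Φ y' - Φ ym) ≤ -c * Φ ym := by
      rw [← hG]; exact hdrift ym
    have hΦmpos := hΦpos ym hymnot
    nlinarith [mul_le_mul_of_nonneg_left eΦ hδ.le, mul_pos (mul_pos hδ hc) hΦmpos]
  -- conclude
  have hW₀ : W y₀ = (1 + Real.log (Φ y₀ / Φmin)) / c := by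
    simp [hWdef, if_neg hy₀]
  rw [← hW₀]
  have hpy₀ := hΦpos y₀ hy₀
  by_contra hcon
  push_neg at hcon
  have hδ : 0 < (h y₀ - W y₀) / (2 * Φ y₀) := by
    apply div_pos (by linarith) (by linarith)
  have := main _ hδ y₀
  have h2 : (h y₀ - W y₀) / (2 * Φ y₀) * Φ y₀ = (h y₀ - W y₀) / 2 := by
    field_simp
  rw [h2] at this
  linarith
end

section
/- Let F_{α,L}(y) = (1−2y)·(y² − y + α/(Σ_L(1−α))) + Δ_L/(4Σ_L) with Σ_L = L_max + L_min, Δ_L = L_max − L_min, and set K_L = 27Δ_L²/(4Σ_L²). If K_L < 1 and 0 < α < Σ_L(1−K_L^{1/3})/(4 + Σ_L(1−K_L^{1/3})), then F_{α,L} has exactly two roots r₁ < r₂ in the interval (0, 1/2), and F_{α,L}(y) < 0 for all y ∈ (r₁, r₂). -/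
set_option maxHeartbeats 1600000


/-- **Roots of the general-graph drift function below the threshold.**
With `Σ_L = L_max + L_min`, `Δ_L = L_max − L_min`, `K_L = 27Δ_L²/(4Σ_L²) < 1`,
and `0 < α < Σ_L(1−K_L^{1/3})/(4 + Σ_L(1−K_L^{1/3}))`, the function
`F_{α,L}(y) = (1−2y)(y² − y + α/(Σ_L(1−α))) + Δ_L/(4Σ_L)` has exactly two roots
`r₁ < r₂` in `(0, 1/2)`, and `F_{α,L} < 0` on `(r₁, r₂)`. -/
theorem stmt_16 (Lmax Lmin : ℝ) (hLmin : 0 < Lmin) (hLL : Lmin < Lmax)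
    (SL DL KL : ℝ) (hS : SL = Lmax + Lmin) (hD : DL = Lmax - Lmin)
    (hK : KL = 27 * DL^2 / (4 * SL^2)) (hK1 : KL < 1)
    (α : ℝ) (hα0 : 0 < α)
    (hαlt : α < SL * (1 - KL ^ ((1:ℝ)/3)) / (4 + SL * (1 - KL ^ ((1:ℝ)/3))))
    (F : ℝ → ℝ)
    (hF : ∀ y, F y = (1-2*y) * (y^2 - y + α/(SL*(1-α))) + DL/(4*SL)) :
    ∃ r₁ r₂ : ℝ, 0 < r₁ ∧ r₁ < r₂ ∧ r₂ < 1/2 ∧ F r₁ = 0 ∧ F r₂ = 0 ∧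
      (∀ y ∈ Set.Ioo (0:ℝ) (1/2), F y = 0 → y = r₁ ∨ y = r₂) ∧
      (∀ y ∈ Set.Ioo r₁ r₂, F y < 0) := by
  have hSL : 0 < SL := by rw [hS]; linarith
  have hDL : 0 < DL := by rw [hD]; linarith
  set d : ℝ := DL / (4*SL) with hd_def
  have hd : 0 < d := by positivity
  have hK0 : 0 < KL := by rw [hK]; positivity
  have hK3 : KL ^ ((1:ℝ)/3) < 1 := Real.rpow_lt_one hK0.le hK1 (by norm_num)
  have hK3pos : 0 < KL ^ ((1:ℝ)/3) := Real.rpow_pos_of_pos hK0 _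
  set t : ℝ := 1 - KL ^ ((1:ℝ)/3) with ht_def
  have ht0 : 0 < t := by simp [ht_def]; linarith
  have ht1 : t < 1 := by simp [ht_def]; linarith
  have hden : 0 < 4 + SL * t := by positivity
  have hα1 : α < 1 := by
    have h2 : SL * t / (4 + SL * t) < 1 := by
      rw [div_lt_one hden]; linarith only []
    linarith
  have h1α : 0 < 1 - α := by linarith
  set c : ℝ := α / (SL * (1 - α)) with hc_def
  have hc0 : 0 < c := by positivity
  -- 4c < t
  have h4c : 4 * c < t := by
    have h1 : α * (4 + SL * t) < SL * t := (lt_div_iff₀ hden).mp hαlt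
    rw [hc_def, show 4 * (α / (SL * (1 - α))) = (4*α) / (SL * (1 - α)) by ring,
      div_lt_iff₀ (by positivity)]
    linarith only [h1]
  have h4c1 : 1 - 4*c > KL ^ ((1:ℝ)/3) := by simp [ht_def] at h4c ⊢; linarith
  have h4cpos : 0 < 1 - 4*c := by linarith
  set q : ℝ := Real.sqrt ((1 - 4*c)/12) with hq_def
  have hq2 : q^2 = (1 - 4*c)/12 := Real.sq_sqrt (by positivity)
  have hq0 : 0 < q := Real.sqrt_pos.mpr (by positivity)
  set m : ℝ := 1/2 - q with hm_def
  clear_value d t c q m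
  have hm2 : m < 1/2 := by simp [hm_def]; linarith
  have hm0 : 0 < m := by
    have hq12 : q < 1/2 := by
      refine lt_of_pow_lt_pow_left₀ 2 (by norm_num) ?_
      rw [hq2]; norm_num; linarith only [hc0]
    simp [hm_def]; linarith only [hq12]
  have hm6 : 6*m^2 - 6*m + 1 + 2*c = 0 := by
    rw [hm_def]; linear_combination 6 * hq2
  -- KL = 108 d^2
  have hKd : KL = 108 * d^2 := by
    rw [hK, hd_def]; field_simp; ring
  -- d < 4 q^3
  have hd4q : d < 4 * q^3 := by
    have hcube : (KL ^ ((1:ℝ)/3))^(3:ℕ) = KL := by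
      rw [← Real.rpow_natCast (KL ^ ((1:ℝ)/3)) 3, ← Real.rpow_mul hK0.le]
      norm_num
    have h1 : (KL ^ ((1:ℝ)/3))^(3:ℕ) < (1 - 4*c)^(3:ℕ) :=
      pow_lt_pow_left₀ h4c1 hK3pos.le (by norm_num)
    rw [hcube] at h1
    -- KL < (1-4c)^3 = (12 q^2)^3 = 1728 q^6, so 108 d^2 < 1728 q^6, d^2 < 16 q^6
    have heq : (12:ℝ)*q^2 = 1 - 4*c := by linarith
    rw [← heq] at h1
    have h1' : 108 * d^2 < 1728 * (q^3)^2 := by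
      calc 108 * d^2 = KL := hKd.symm
        _ < (12*q^2)^3 := h1
        _ = 1728 * (q^3)^2 := by ring
    have h2 : d^2 < (4 * q^3)^2 := by linarith only [h1']
    exact lt_of_pow_lt_pow_left₀ 2 (by positivity) h2
  -- values of F
  have hF0 : 0 < F 0 := by
    have : F 0 = c + d := by rw [hF]; ring
    rw [this]; linarith only [hc0, hd]
  have hFh : F (1/2) = d := by rw [hF]; ring
  have hFm : F m = d - 4*q^3 := by
    rw [hF, hm_def]
    linear_combination 6 * q * hq2
  have hFmneg : F m < 0 := by rw [hFm]; linarith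
  -- strict antitone on [0, m]
  have hanti : ∀ x y : ℝ, 0 ≤ x → x < y → y ≤ m → F y < F x := by
    intro x y hx hxy hym
    have key : F x - F y = (y - x) *
        (2*((m-x)^2 + (m-x)*(m-y) + (m-y)^2) + 3*((m-x)+(m-y))*(1-2*m)) := by
      rw [hF, hF]; linear_combination (y - x) * hm6
    have hu : 0 < m - x := by linarith
    have hv : 0 ≤ m - y := by linarith
    have h12 : 0 < 1 - 2*m := by linarith
    have hbr : 0 < 2*((m-x)^2 + (m-x)*(m-y) + (m-y)^2) + 3*((m-x)+(m-y))*(1-2*m) := by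
      linarith only [mul_pos hu hu, mul_nonneg hu.le hv, mul_nonneg hv hv,
        mul_pos (by linarith only [hu, hv] : (0:ℝ) < (m-x)+(m-y)) h12]
    linarith only [key, mul_pos (sub_pos.mpr hxy) hbr]
  -- strict mono on [m, 1/2]
  have hmono : ∀ x y : ℝ, m ≤ x → x < y → y ≤ 1/2 → F x < F y := by
    intro x y hmx hxy hyh
    have key : F y - F x = (y - x) *
        (3*((x-m)+(y-m))*(1-2*m) - 2*((x-m)^2 + (x-m)*(y-m) + (y-m)^2)) := by
      rw [hF, hF]; linear_combination (x - y) * hm6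
    have hu : 0 ≤ x - m := by linarith
    have hv : 0 < y - m := by linarith
    have hh : 0 < 1/2 - m := by linarith
    have hbr : 0 < 3*((x-m)+(y-m))*(1-2*m) - 2*((x-m)^2 + (x-m)*(y-m) + (y-m)^2) := by
      linarith only [mul_nonneg hu (by linarith only [hxy, hyh] : (0:ℝ) ≤ (1/2-m)-(x-m)),
        mul_nonneg hv.le (by linarith only [hxy, hyh] : (0:ℝ) ≤ (1/2-m)-(x-m)),
        mul_nonneg hv.le (by linarith only [hyh] : (0:ℝ) ≤ (1/2-m)-(y-m)),
        mul_nonneg hu hh.le,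
        mul_pos hh hv]
    linarith only [key, mul_pos (sub_pos.mpr hxy) hbr]
  -- continuity
  have hFc : Continuous F := by
    have : F = fun y => (1-2*y) * (y^2 - y + c) + d := funext hF
    rw [this]; fun_prop
  -- IVT
  obtain ⟨r₁, hr₁mem, hr₁⟩ :=
    intermediate_value_Ioo' hm0.le hFc.continuousOn (Set.mem_Ioo.mpr ⟨hFmneg, hF0⟩)
  obtain ⟨r₂, hr₂mem, hr₂⟩ :=
    intermediate_value_Ioo hm2.le hFc.continuousOn
      (Set.mem_Ioo.mpr ⟨hFmneg, by rw [hFh]; exact hd⟩)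
  refine ⟨r₁, r₂, hr₁mem.1, lt_trans hr₁mem.2 hr₂mem.1, hr₂mem.2, hr₁, hr₂, ?_, ?_⟩
  · intro y hy hFy
    rcases lt_trichotomy y m with h | h | h
    · left
      rcases lt_trichotomy y r₁ with h' | h' | h'
      · exact absurd (hanti y r₁ hy.1.le h' hr₁mem.2.le) (by rw [hr₁, hFy]; simp)
      · exact h'
      · exact absurd (hanti r₁ y hr₁mem.1.le h' h.le) (by rw [hr₁, hFy]; simp)
    · exact absurd hFmneg (by rw [← h, hFy]; simp)
    · right
      rcases lt_trichotomy y r₂ with h' | h' | h'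
      · exact absurd (hmono y r₂ h.le h' hr₂mem.2.le) (by rw [hr₂, hFy]; simp)
      · exact h'
      · exact absurd (hmono r₂ y hr₂mem.1.le h' hy.2.le) (by rw [hr₂, hFy]; simp)
  · intro y hy
    rcases le_or_gt y m with h | h
    · have := hanti r₁ y hr₁mem.1.le hy.1 h
      rw [hr₁] at this; exact this
    · have := hmono y r₂ h.le hy.2 hr₂mem.2.le
      rw [hr₂] at this; exact this
end
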